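/- Every Cantor subset K of ℝ contains a Cantor subset K₀ of packing dimension zero (indeed of upper Minkowski dimension zero). -/

import Mathlib

open Set Filter Metric
open scoped Topology

/-- The minimal number of `ε`-balls needed to cover `s` (covering number). -/
noncomputable def covNum (s : Set ℝ) (ε : ℝ) : ℕ :=
  sInf {m : ℕ | ∃ t : Finset ℝ, t.card ≤ m ∧ s ⊆ ⋃ x ∈ t, Metric.ball x ε}

/-- The upper Minkowski (box-counting) dimension of a bounded set,
computed along the dyadic scales `2⁻ⁿ`. -/
noncomputable def upperMinkDim (s : Set ℝ) : ℝ :=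
  Filter.limsup
    (fun n : ℕ => Real.log (covNum s (1 / 2 ^ n)) / Real.log (2 ^ n)) atTop

/-!
A Cantor set `K` is a nonempty compact perfect metric space, so the usual splitting of perfect
sets yields a Cantor scheme on `K` whose pieces at depth `k + 1` have diameter at most
`2 ^ (-(k + 1)²)`, with an induced continuous injection `f` of the Cantor space into `K`.
Its image `K₀` is again a Cantor set, and at scale `2⁻ⁿ` the `2 ^ (√n + 1)` pieces of depth
`√n + 1` already cover `K₀`; hence `log N(K₀, 2⁻ⁿ) / log 2ⁿ ≤ (√n + 1) / n → 0`.
-/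

open scoped ENNReal

instance Pi.perfectSpace {ι : Type*} [Infinite ι] {X : ι → Type*} [∀ i, TopologicalSpace (X i)]
    [∀ i, Nontrivial (X i)] : PerfectSpace (∀ i, X i) := by
  classical
  refine ⟨preperfect_iff_nhds.2 fun x _ U hU => ?_⟩
  rw [nhds_pi, Filter.mem_pi'] at hU
  obtain ⟨I, t, ht, hIU⟩ := hU
  obtain ⟨m, hm⟩ := Infinite.exists_notMem_finset I
  obtain ⟨b, hb⟩ := exists_ne (x m)
  refine ⟨Function.update x m b, ⟨hIU fun i hi => ?_, mem_univ _⟩,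
    fun h => hb (by simpa using congrFun h m)⟩
  rw [Function.update_of_ne (ne_of_mem_of_not_mem hi hm)]
  exact mem_of_mem_nhds (ht i)

theorem Homeomorph.perfectSpace {X Y : Type*} [TopologicalSpace X] [TopologicalSpace Y]
    [PerfectSpace X] (h : X ≃ₜ Y) : PerfectSpace Y := by
  refine perfectSpace_iff_forall_not_isolated.2 fun y => ?_
  rw [← h.apply_symm_apply y, ← h.map_punctured_nhds_eq]
  infer_instance

section CantorScheme

variable {α : Type*} [MetricSpace α]

theorem Perfect.exists_cantorScheme {C : Set α} (hC : Perfect C) (hne : C.Nonempty)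
    {ε : ℕ → ℝ≥0∞} (hε : ∀ n, 0 < ε n) :
    ∃ A : List Bool → Set α, A [] = C ∧ (∀ l, IsClosed (A l) ∧ (A l).Nonempty) ∧
      CantorScheme.Antitone A ∧ CantorScheme.Disjoint A ∧
      ∀ a l, ediam (A (a :: l)) ≤ ε l.length := by
  let P := {D : Set α // Perfect D ∧ D.Nonempty}
  have hsplit : ∀ (D : P) (n : ℕ), ∃ E : Bool → P,
      (∀ a, (E a).1 ⊆ D.1 ∧ ediam (E a).1 ≤ ε n) ∧ Disjoint (E false).1 (E true).1 := by
    intro D n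
    obtain ⟨C₀, C₁, ⟨hp₀, hn₀, hs₀, hd₀⟩, ⟨hp₁, hn₁, hs₁, hd₁⟩, hdisj⟩ :=
      D.2.1.small_diam_splitting D.2.2 (hε n)
    exact ⟨fun a => bif a then ⟨C₁, hp₁, hn₁⟩ else ⟨C₀, hp₀, hn₀⟩,
      by rintro (_ | _) <;> simp [*], hdisj⟩
  choose E hE hdisj using hsplit
  let A : List Bool → P := fun l => l.rec ⟨C, hC, hne⟩ fun a l D => E D l.length a
  refine ⟨fun l => (A l).1, rfl, fun l => ⟨(A l).2.1.closed, (A l).2.2⟩,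
    fun l a => (hE _ _ a).1, fun l a b hab => ?_, fun a l => (hE _ _ a).2⟩
  cases a <;> cases b
  all_goals first | exact absurd rfl hab | exact hdisj _ _ | exact (hdisj _ _).symm

theorem Perfect.exists_nat_bool_injection_dist_le [CompleteSpace α] {C : Set α}
    (hC : Perfect C) (hne : C.Nonempty) {u : ℕ → ℝ} (hu_pos : ∀ n, 0 < u n)
    (hu : Tendsto u atTop (𝓝 0)) :
    ∃ f : (ℕ → Bool) → α, range f ⊆ C ∧ Continuous f ∧ Function.Injective f ∧
      ∀ n x, ∀ y ∈ PiNat.cylinder x (n + 1), dist (f x) (f y) ≤ u n := by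
  obtain ⟨A, hA₀, hA, hanti, hdisj, hdiam⟩ :=
    hC.exists_cantorScheme hne (ε := fun n => ENNReal.ofReal (u n))
      (fun n => ENNReal.ofReal_pos.2 (hu_pos n))
  have hdiam_res : ∀ x n, ediam (A (PiNat.res x (n + 1))) ≤ ENNReal.ofReal (u n) := by
    intro x n
    simpa [PiNat.res_succ, PiNat.res_length] using hdiam (x n) (PiNat.res x n)
  have hvanish : CantorScheme.VanishingDiam A := by
    intro x
    rw [← tendsto_add_atTop_iff_nat 1]
    refine tendsto_of_tendsto_of_tendsto_of_le_of_le tendsto_const_nhds ?_ (fun _ => bot_le)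
      (hdiam_res x)
    simpa using ENNReal.tendsto_ofReal hu
  have hdom : (CantorScheme.inducedMap A).1 = univ :=
    (hanti.closureAntitone fun l => (hA l).1).map_of_vanishingDiam hvanish fun l => (hA l).2
  let f : (ℕ → Bool) → α := fun x => (CantorScheme.inducedMap A).2 ⟨x, hdom ▸ mem_univ x⟩
  have hf : ∀ x n, f x ∈ A (PiNat.res x n) := fun x => CantorScheme.map_mem _
  refine ⟨f, fun _ ⟨x, hx⟩ => hx ▸ hA₀ ▸ hf x 0, hvanish.map_continuous.comp (by fun_prop),
    fun x y hxy => congrArg Subtype.val (hdisj.map_injective hxy), fun n x y hy => ?_⟩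
  rw [PiNat.cylinder_eq_res, mem_ofPred_eq] at hy
  rw [← edist_le_ofReal (hu_pos n).le]
  refine (edist_le_ediam_of_mem (hf x (n + 1)) ?_).trans (hdiam_res x n)
  rw [← hy]
  exact hf y (n + 1)

end CantorScheme

theorem covNum_le_card {s : Set ℝ} {ε : ℝ} {t : Finset ℝ} (h : s ⊆ ⋃ x ∈ t, ball x ε) :
    covNum s ε ≤ t.card :=
  Nat.sInf_le ⟨t, le_rfl, h⟩

theorem covNum_range_le_two_pow {f : (ℕ → Bool) → ℝ} {ε : ℝ} {k : ℕ}
    (hf : ∀ x, ∀ y ∈ PiNat.cylinder x k, dist (f x) (f y) < ε) :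
    covNum (range f) ε ≤ 2 ^ k := by
  let extend : (Fin k → Bool) → ℕ → Bool := fun v i => if h : i < k then v ⟨i, h⟩ else false
  refine (covNum_le_card (t := Finset.univ.image fun v => f (extend v)) ?_).trans ?_
  · rintro _ ⟨x, rfl⟩
    refine mem_biUnion (Finset.mem_image_of_mem _ (Finset.mem_univ fun i : Fin k => x i)) ?_
    rw [mem_ball]
    exact hf x _ fun i hi => by simp [extend, hi]
  · exact Finset.card_image_le.trans (by simp)

theorem upperMinkDim_eq_zero_of_covNum_le {s : Set ℝ} {g : ℕ → ℕ}
    (hcov : ∀ n, covNum s (1 / 2 ^ n) ≤ 2 ^ g n)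
    (hg : Tendsto (fun n => (g n : ℝ) / n) atTop (𝓝 0)) : upperMinkDim s = 0 := by
  refine Tendsto.limsup_eq (tendsto_of_tendsto_of_tendsto_of_le_of_le tendsto_const_nhds hg
    (fun n => ?_) (fun n => ?_))
  · exact div_nonneg (Real.log_natCast_nonneg _) (Real.log_nonneg (one_le_pow₀ one_le_two))
  have hlog2 : 0 < Real.log 2 := Real.log_pos one_lt_two
  have hlog_cov : Real.log (covNum s (1 / 2 ^ n)) ≤ g n * Real.log 2 := by
    rcases Nat.eq_zero_or_pos (covNum s (1 / 2 ^ n)) with h | h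
    · simp only [h, CharP.cast_eq_zero, Real.log_zero]
      positivity
    · rw [← Real.log_pow]
      exact Real.log_le_log (by exact_mod_cast h) (by exact_mod_cast hcov n)
  calc Real.log (covNum s (1 / 2 ^ n)) / Real.log (2 ^ n)
      ≤ g n * Real.log 2 / (n * Real.log 2) := by
        rw [Real.log_pow]
        gcongr
    _ = g n / n := mul_div_mul_right _ _ hlog2.ne'

theorem tendsto_nat_sqrt_add_one_div :
    Tendsto (fun n => ((Nat.sqrt n + 1 : ℕ) : ℝ) / n) atTop (𝓝 0) := by
  have hsqrt : Tendsto (fun n => (Nat.sqrt n : ℝ)) atTop atTop :=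
    tendsto_natCast_atTop_atTop.comp <|
      tendsto_atTop_atTop.2 fun b => ⟨b * b, fun n hn => Nat.le_sqrt.2 hn⟩
  refine tendsto_of_tendsto_of_tendsto_of_le_of_le' tendsto_const_nhds
    (hsqrt.const_div_atTop 2) (Eventually.of_forall fun n => by positivity) ?_
  filter_upwards [eventually_ge_atTop 1] with n hn
  have hs : (1 : ℝ) ≤ Nat.sqrt n := by exact_mod_cast Nat.le_sqrt.2 hn
  have hsn : (Nat.sqrt n : ℝ) * Nat.sqrt n ≤ n := by exact_mod_cast Nat.sqrt_le n
  rw [div_le_div_iff₀ (by positivity) (by positivity)]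
  push_cast
  nlinarith

theorem stmt18 (K : Set ℝ) (hK : Nonempty (↥K ≃ₜ (ℕ → Bool))) :
    ∃ K₀ : Set ℝ, K₀ ⊆ K ∧ Nonempty (↥K₀ ≃ₜ (ℕ → Bool)) ∧ upperMinkDim K₀ = 0 := by
  obtain ⟨e⟩ := hK
  have : CompactSpace K := e.symm.compactSpace
  have : PerfectSpace K := e.symm.perfectSpace
  let u : ℕ → ℝ := fun n => (1 / 2) ^ ((n + 1) * (n + 1))
  have hu : Tendsto u atTop (𝓝 0) :=
    (tendsto_pow_atTop_nhds_zero_of_lt_one (by norm_num) (by norm_num)).comp <|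
      tendsto_atTop_mono (fun n => (Nat.le_succ n).trans (Nat.le_mul_self _)) tendsto_id
  obtain ⟨f, -, hf_cont, hf_inj, hf_dist⟩ :=
    (PerfectSpace.univ_perfect (α := K)).exists_nat_bool_injection_dist_le
      ⟨e.symm default, trivial⟩ (fun n => by positivity) hu
  have hf_emb : Topology.IsClosedEmbedding (fun x => (f x : ℝ)) :=
    (continuous_subtype_val.comp hf_cont).isClosedEmbedding (Subtype.val_injective.comp hf_inj)
  refine ⟨range fun x => (f x : ℝ), range_subset_iff.2 fun x => (f x).2,
    ⟨hf_emb.isEmbedding.toHomeomorph.symm⟩,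
    upperMinkDim_eq_zero_of_covNum_le (fun n => covNum_range_le_two_pow fun x y hy => ?_)
      tendsto_nat_sqrt_add_one_div⟩
  calc dist (f x : ℝ) (f y) ≤ u (Nat.sqrt n) := hf_dist _ x y hy
    _ < (1 / 2) ^ n :=
      pow_lt_pow_right_of_lt_one₀ (by norm_num) (by norm_num) (Nat.lt_succ_sqrt n)
    _ = 1 / 2 ^ n := one_div_pow 2 n
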